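/- Let μ₁, …, μ_K be probability measures on ℝ with finite second moment, and let w₁, …, w_K ≥ 0 with ∑ w_s = 1. Define q*(u) = ∑_{s=1}^K w_s F_{μ_s}⁻¹(u) for u ∈ (0,1), where F⁻¹ is the left-continuous generalized quantile function, and let μ* be the pushforward of the uniform distribution on (0,1) by q*. Then μ* is the unique minimizer over ν ∈ P₂(ℝ) of the functional ν ↦ ∑_{s=1}^K w_s W₂²(μ_s, ν). -/

import Mathlib

open MeasureTheory ProbabilityTheory Set

/-- Generalized (left-continuous) quantile function of a measure on ℝ. -/
noncomputable def quantile (μ : Measure ℝ) (u : ℝ) : ℝ :=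
  sInf {x : ℝ | u ≤ cdf μ x}

/-- Squared Wasserstein-2 distance between measures on ℝ, via the quantile representation. -/
noncomputable def W2sq (μ ν : Measure ℝ) : ℝ :=
  ∫ u in Ioo (0:ℝ) 1, (quantile μ u - quantile ν u) ^ 2

/-- The one-dimensional Wasserstein-2 barycenter: the pushforward of the uniform
distribution on (0,1) by the weighted average of the quantile functions. -/
noncomputable def wassersteinBarycenter {K : ℕ} (w : Fin K → ℝ) (μ : Fin K → Measure ℝ) :
    Measure ℝ :=
  Measure.map (fun u => ∑ s, w s * quantile (μ s) u) (volume.restrict (Ioo (0:ℝ) 1))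

/-! In the quantile representation, `ν ↦ ∑ w_s W₂²(μ_s, ν)` is `ν ↦ ∑ w_s ‖F_s⁻¹ - F_ν⁻¹‖²` in
`L²(0, 1)`, and the bias–variance identity turns it into `∑ w_s ‖F_s⁻¹ - q*‖² + ‖F_ν⁻¹ - q*‖²`.
Since `q*` is nondecreasing it is a.e. the quantile function of its own law `μ*`, so the first
term is the value at `μ*`. The second term vanishes only if `F_ν⁻¹ = q*` a.e., which forces
`ν = μ*` because every `ν` is the law of `F_ν⁻¹` under the uniform distribution. -/

local notation "𝕌" => volume.restrict (Ioo (0 : ℝ) 1)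

instance : IsProbabilityMeasure 𝕌 :=
  ⟨by simp [Measure.restrict_apply MeasurableSet.univ, Real.volume_Ioo]⟩

lemma volume_restrict_Ioo_Iic {c : ℝ} (hc : c ≤ 1) : 𝕌 (Iic c) = ENNReal.ofReal c := by
  rw [Measure.restrict_congr_set Ioo_ae_eq_Ioc, Measure.restrict_apply measurableSet_Iic,
    inter_comm, Ioc_inter_Iic, Real.volume_Ioc, inf_eq_right.2 hc, sub_zero]

theorem ae_eq_of_ae_le_of_map_eq {α : Type*} [MeasurableSpace α] {m : Measure α}
    [IsFiniteMeasure m] {f g : α → ℝ} (hf : AEMeasurable f m) (hg : AEMeasurable g m)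
    (hfg : f ≤ᵐ[m] g) (hmap : m.map f = m.map g) : f =ᵐ[m] g := by
  -- Compose with the bounded, strictly monotone `arctan` to compare integrals of
  -- possibly non-integrable `f` and `g`.
  have integrable_arctan {h : α → ℝ} (hh : AEMeasurable h m) :
      Integrable (fun x => Real.arctan (h x)) m :=
    .of_bound (Real.continuous_arctan.measurable.comp_aemeasurable hh).aestronglyMeasurable
      (Real.pi / 2)
      (ae_of_all _ fun x => abs_le.2
        ⟨(Real.neg_pi_div_two_lt_arctan _).le, (Real.arctan_lt_pi_div_two _).le⟩)
  have integral_eq : ∫ x, Real.arctan (f x) ∂m = ∫ x, Real.arctan (g x) ∂m := by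
    rw [← integral_map hf Real.continuous_arctan.aestronglyMeasurable, hmap,
      integral_map hg Real.continuous_arctan.aestronglyMeasurable]
  filter_upwards [(integral_eq_iff_of_ae_le (integrable_arctan hf) (integrable_arctan hg)
    (hfg.mono fun x hx => Real.arctan_strictMono.monotone hx)).1 integral_eq] with x hx
  exact Real.arctan_injective hx

lemma ae_eq_of_integral_sub_sq_eq_zero {α : Type*} [MeasurableSpace α] {m : Measure α}
    {f g : α → ℝ} (hf : MemLp f 2 m) (hg : MemLp g 2 m) (h : ∫ x, (f x - g x) ^ 2 ∂m = 0) :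
    f =ᵐ[m] g := by
  filter_upwards [(integral_eq_zero_iff_of_nonneg (fun x => sq_nonneg _)
    (hf.sub hg).integrable_sq).1 h] with x hx
  exact sub_eq_zero.1 (pow_eq_zero_iff two_ne_zero |>.1 hx)

section Quantile

variable {ν : Measure ℝ} {u : ℝ}

lemma le_cdf_quantile (hu : u ∈ Ioo 0 1) : u ≤ cdf ν (quantile ν u) := by
  obtain ⟨x, hx⟩ := ((tendsto_cdf_atTop ν).eventually (eventually_gt_nhds hu.2)).exists
  have le_cdf_of_lt {y : ℝ} (hy : quantile ν u < y) : u ≤ cdf ν y :=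
    let ⟨z, hz, hzy⟩ := exists_lt_of_csInf_lt ⟨x, hx.le⟩ hy
    hz.trans (monotone_cdf ν hzy.le)
  exact ge_of_tendsto (((cdf ν).right_continuous _).mono Ioi_subset_Ici_self)
    (eventually_mem_nhdsWithin.mono fun y hy => le_cdf_of_lt hy)

lemma quantile_le_iff (hu : u ∈ Ioo 0 1) {x : ℝ} : quantile ν u ≤ x ↔ u ≤ cdf ν x := by
  refine ⟨fun h => (le_cdf_quantile hu).trans (monotone_cdf ν h), fun h => csInf_le ?_ h⟩
  obtain ⟨x₀, hx₀⟩ := ((tendsto_cdf_atBot ν).eventually (eventually_lt_nhds hu.1)).exists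
  exact ⟨x₀, fun y hy => le_of_not_gt fun hyx₀ => (hy.trans (monotone_cdf ν hyx₀.le)).not_gt hx₀⟩

lemma monotoneOn_quantile (ν : Measure ℝ) : MonotoneOn (quantile ν) (Ioo 0 1) :=
  fun _ hu _ hv huv => (quantile_le_iff hu).2 (huv.trans (le_cdf_quantile hv))

lemma aemeasurable_quantile (ν : Measure ℝ) : AEMeasurable (quantile ν) 𝕌 :=
  aemeasurable_restrict_of_monotoneOn measurableSet_Ioo (monotoneOn_quantile ν)

lemma map_quantile (ν : Measure ℝ) [IsProbabilityMeasure ν] :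
    Measure.map (quantile ν) 𝕌 = ν := by
  have := Measure.isProbabilityMeasure_map (μ := 𝕌) (aemeasurable_quantile ν)
  refine Measure.ext_of_Iic _ _ fun x => ?_
  rw [Measure.map_apply_of_aemeasurable (aemeasurable_quantile ν) measurableSet_Iic,
    measure_congr (s := quantile ν ⁻¹' Iic x) (t := Iic (cdf ν x)) (Filter.eventuallyEq_set.2 <|
      (ae_restrict_mem measurableSet_Ioo).mono fun u hu => quantile_le_iff hu),
    volume_restrict_Ioo_Iic (cdf_le_one ν x), ofReal_cdf]

lemma memLp_quantile [IsProbabilityMeasure ν] {p : ENNReal} (hν : MemLp id p ν) :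
    MemLp (quantile ν) p 𝕌 := by
  rw [← map_quantile ν] at hν
  exact (memLp_map_measure_iff aestronglyMeasurable_id (aemeasurable_quantile ν)).1 hν

lemma quantile_map_le {g : ℝ → ℝ} (hg : MonotoneOn g (Ioo 0 1)) (hu : u ∈ Ioo 0 1) :
    quantile (Measure.map g 𝕌) u ≤ g u := by
  have hgm : AEMeasurable g 𝕌 := aemeasurable_restrict_of_monotoneOn measurableSet_Ioo hg
  have := Measure.isProbabilityMeasure_map (μ := 𝕌) hgm
  rw [quantile_le_iff hu, ← ENNReal.ofReal_le_ofReal_iff (cdf_nonneg _ _), ofReal_cdf,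
    Measure.map_apply_of_aemeasurable hgm measurableSet_Iic, ← volume_restrict_Ioo_Iic hu.2.le]
  exact measure_mono_ae <| (ae_restrict_mem measurableSet_Ioo).mono fun v hv hvu => hg hv hu hvu

-- Only `quantile ≤ g` has to be checked: both sides have the same law under `𝕌`.
lemma quantile_map_ae_eq {g : ℝ → ℝ} (hg : MonotoneOn g (Ioo 0 1)) :
    quantile (Measure.map g 𝕌) =ᵐ[𝕌] g := by
  have hgm : AEMeasurable g 𝕌 := aemeasurable_restrict_of_monotoneOn measurableSet_Ioo hg
  have := Measure.isProbabilityMeasure_map (μ := 𝕌) hgm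
  exact ae_eq_of_ae_le_of_map_eq (aemeasurable_quantile _) hgm
    ((ae_restrict_mem measurableSet_Ioo).mono fun u hu => quantile_map_le hg hu) (map_quantile _)

end Quantile

section WeightedMean

variable {ι : Type*} [Fintype ι] {w : ι → ℝ}

lemma sum_mul_sub_sq_eq (hw1 : ∑ i, w i = 1) (a : ι → ℝ) (b : ℝ) :
    ∑ i, w i * (a i - b) ^ 2
      = ∑ i, w i * (a i - ∑ j, w j * a j) ^ 2 + (b - ∑ j, w j * a j) ^ 2 := by
  set ā := ∑ j, w j * a j
  have sum_dev : ∑ i, w i * (a i - ā) = 0 := by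
    simp only [mul_sub, Finset.sum_sub_distrib, ← Finset.sum_mul, hw1, one_mul, ā, sub_self]
  calc ∑ i, w i * (a i - b) ^ 2
      = ∑ i, (w i * (a i - ā) ^ 2 + 2 * (ā - b) * (w i * (a i - ā)) + (b - ā) ^ 2 * w i) :=
        Finset.sum_congr rfl fun i _ => by ring
    _ = ∑ i, w i * (a i - ā) ^ 2 + (b - ā) ^ 2 := by
        rw [Finset.sum_add_distrib, Finset.sum_add_distrib, ← Finset.mul_sum, ← Finset.mul_sum,
          sum_dev, hw1]
        ring

lemma sum_mul_integral_sub_sq_eq {α : Type*} [MeasurableSpace α] {m : Measure α}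
    (hw1 : ∑ i, w i = 1) {a : ι → α → ℝ} (ha : ∀ i, MemLp (a i) 2 m) {b : α → ℝ}
    (hb : MemLp b 2 m) :
    ∑ i, w i * ∫ x, (a i x - b x) ^ 2 ∂m
      = ∑ i, w i * ∫ x, (a i x - ∑ j, w j * a j x) ^ 2 ∂m
        + ∫ x, (b x - ∑ j, w j * a j x) ^ 2 ∂m := by
  have hā : MemLp (fun x => ∑ j, w j * a j x) 2 m :=
    memLp_finsetSum (f := fun j x => w j * a j x) _ fun j _ => (ha j).const_mul (w j)
  have integrable_dev {c : α → ℝ} (hc : MemLp c 2 m) (i : ι) :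
      Integrable (fun x => w i * (a i x - c x) ^ 2) m :=
    ((ha i).sub hc).integrable_sq.const_mul (w i)
  have sum_integral {c : α → ℝ} (hc : MemLp c 2 m) :
      ∑ i, w i * ∫ x, (a i x - c x) ^ 2 ∂m = ∫ x, ∑ i, w i * (a i x - c x) ^ 2 ∂m := by
    rw [integral_finsetSum _ fun i _ => integrable_dev hc i]
    simp only [integral_const_mul]
  rw [sum_integral hb, sum_integral hā]
  exact (integral_congr_ae (ae_of_all _ fun x => sum_mul_sub_sq_eq hw1 (a · x) (b x))).trans
    (integral_add (integrable_finsetSum _ fun i _ => integrable_dev hā i) (hb.sub hā).integrable_sq)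

end WeightedMean

section Barycenter

variable {K : ℕ} {w : Fin K → ℝ} {μ : Fin K → Measure ℝ}

lemma quantile_wassersteinBarycenter_ae_eq (hw : ∀ s, 0 ≤ w s) :
    quantile (wassersteinBarycenter w μ) =ᵐ[𝕌] fun u => ∑ s, w s * quantile (μ s) u :=
  quantile_map_ae_eq fun _ hu _ hv huv =>
    Finset.sum_le_sum fun s _ => mul_le_mul_of_nonneg_left (monotoneOn_quantile _ hu hv huv) (hw s)

theorem sum_mul_W2sq_eq_add (hw : ∀ s, 0 ≤ w s) (hw1 : ∑ s, w s = 1)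
    (hμ : ∀ s, MemLp (quantile (μ s)) 2 𝕌) {ν : Measure ℝ} (hν : MemLp (quantile ν) 2 𝕌) :
    ∑ s, w s * W2sq (μ s) ν = ∑ s, w s * W2sq (μ s) (wassersteinBarycenter w μ)
      + ∫ u in Ioo 0 1, (quantile ν u - ∑ s, w s * quantile (μ s) u) ^ 2 := by
  have W2sq_barycenter (s : Fin K) : W2sq (μ s) (wassersteinBarycenter w μ)
      = ∫ u in Ioo 0 1, (quantile (μ s) u - ∑ t, w t * quantile (μ t) u) ^ 2 :=
    integral_congr_ae <| by
      filter_upwards [quantile_wassersteinBarycenter_ae_eq (μ := μ) hw] with u hu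
      rw [hu]
  simp only [W2sq_barycenter]
  exact sum_mul_integral_sub_sq_eq hw1 hμ hν

end Barycenter

/-- The pushforward of `Unif(0,1)` by `q*(u) = ∑ w_s F_{μ_s}⁻¹(u)` is the unique minimizer of
`ν ↦ ∑ w_s W₂²(μ_s, ν)` over probability measures with finite second moment. -/
theorem wassersteinBarycenter_isUniqueMinimizer {K : ℕ} (w : Fin K → ℝ)
    (hw : ∀ s, 0 ≤ w s) (hw1 : ∑ s, w s = 1)
    (μ : Fin K → Measure ℝ) (hprob : ∀ s, IsProbabilityMeasure (μ s))
    (hmom : ∀ s, Integrable (fun x : ℝ => x ^ 2) (μ s)) :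
    (∀ ν : Measure ℝ, IsProbabilityMeasure ν → Integrable (fun x : ℝ => x ^ 2) ν →
      ∑ s, w s * W2sq (μ s) (wassersteinBarycenter w μ) ≤ ∑ s, w s * W2sq (μ s) ν) ∧
    (∀ ν : Measure ℝ, IsProbabilityMeasure ν → Integrable (fun x : ℝ => x ^ 2) ν →
      (∑ s, w s * W2sq (μ s) ν = ∑ s, w s * W2sq (μ s) (wassersteinBarycenter w μ)) →
      ν = wassersteinBarycenter w μ) := by
  have memLp_quantile_of_sq {ρ : Measure ℝ} (hρ : IsProbabilityMeasure ρ)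
      (h : Integrable (fun x : ℝ => x ^ 2) ρ) : MemLp (quantile ρ) 2 𝕌 :=
    memLp_quantile ((memLp_two_iff_integrable_sq aestronglyMeasurable_id).2 h)
  have decomp {ν} (hν : IsProbabilityMeasure ν) (hmν : Integrable (fun x : ℝ => x ^ 2) ν) :=
    sum_mul_W2sq_eq_add hw hw1 (fun s => memLp_quantile_of_sq (hprob s) (hmom s))
      (memLp_quantile_of_sq hν hmν)
  refine ⟨fun ν hν hmν => ?_, fun ν hν hmν heq => ?_⟩
  · rw [decomp hν hmν]
    exact le_add_of_nonneg_right (integral_nonneg fun u => sq_nonneg _)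
  · have quantile_ae_eq : quantile ν =ᵐ[𝕌] fun u => ∑ s, w s * quantile (μ s) u :=
      ae_eq_of_integral_sub_sq_eq_zero (memLp_quantile_of_sq hν hmν)
        (memLp_finsetSum (f := fun s u => w s * quantile (μ s) u) _ fun s _ =>
          (memLp_quantile_of_sq (hprob s) (hmom s)).const_mul (w s))
        (by linarith [decomp hν hmν])
    calc ν = Measure.map (quantile ν) 𝕌 := (map_quantile ν).symm
      _ = wassersteinBarycenter w μ := Measure.map_congr quantile_ae_eq
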